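/- Let T be a finite set of Wang tiles, σ_T the substitution on A = T × {→,↑,←,↓} constructed from T as follows: σ_base((a,d)) = {[(0,0),(a,d)]}, and the concatenation rules are the unordered dominoes of decorated tiles in which the underlying Wang tiles match on the shared edge and exactly one arrow points at the other cell, with σ_rule(pointing cell, pointed cell) = (1,0). Suppose (a_1,…,a_n) is a valid tiling of a cycle by T, placed at positions p_1,…,p_n (p_n = p_1, a_n = a_1), and let γ = (c_1,…,c_n) be the C_{σ_T}-loop where c_i = [p_i,(a_i,d_i)] and d_i is the direction from p_i to p_{i+1} for 1 ≤ i < n (and d_n = d_1). Then γ is a C_{σ_T}-loop and ω_{σ_T}(γ) = (n−1, 0) ≠ (0,0); in particular σ_T is not consistent. -/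

import Mathlib

open scoped Classical

/-- A combinatorial substitution on alphabet `A` with vectors in `V`:
a base rule sending each letter to a pattern, together with a deterministic
finite set of concatenation rules.  `rule t t' u = some v` encodes the
concatenation rule `(t, t', u) ↦ v`. -/
structure Subst (A : Type*) (V : Type*) [AddCommGroup V] where
  /-- the base rule -/
  base : A → Finset (V × A)
  /-- the image of a letter is a pattern: its cells have distinct vectors -/
  basePat : ∀ t : A, ∀ c ∈ base t, ∀ c' ∈ base t, c.1 = c'.1 → c = c'
  /-- the concatenation rules, as a partial function -/
  rule : A → A → V → Option V
  /-- there are finitely many concatenation rules -/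
  finiteRules : {u : V | ∃ t t', rule t t' u ≠ none}.Finite
  /-- determinism: no two rules with left-hand sides `(t,t',u)` and `(t,t',-u)` -/
  det : ∀ t t' u, (rule t t' u).isSome → (rule t t' (-u)).isSome → u = -u

/-- A pattern is a finite set of cells with pairwise distinct vectors. -/
def IsPattern {V A : Type*} (P : Finset (V × A)) : Prop :=
  ∀ c ∈ P, ∀ c' ∈ P, c.1 = c'.1 → c = c'

namespace Subst

variable {A V : Type*} [AddCommGroup V]

/-- `σ_rule(c, c')`: the relative position of the images of the two cells
`c`, `c'`, when some concatenation rule applies to them. -/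
def ruleVec (σ : Subst A V) (c c' : V × A) : Option V :=
  match σ.rule c.2 c'.2 (c'.1 - c.1) with
  | some v => some v
  | none => (σ.rule c'.2 c.2 (c.1 - c'.1)).map (fun v => -v)

/-- The image vector `ω_σ(γ)` of a path `γ`. -/
def omega (σ : Subst A V) (γ : List (V × A)) : V :=
  ((γ.zip γ.tail).map (fun p => (σ.ruleVec p.1 p.2).getD 0)).sum

/-- A `C_σ`-path: a nonempty sequence of cells in which any two consecutive
cells form a translated copy of a starting pattern of `σ`, and any two cells
with the same vector are equal. -/
def IsPath (σ : Subst A V) (γ : List (V × A)) : Prop :=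
  γ ≠ [] ∧ γ.Chain' (fun c c' => (σ.ruleVec c c').isSome) ∧
    ∀ c ∈ γ, ∀ c' ∈ γ, c.1 = c'.1 → c = c'

/-- A `C_σ`-path of the pattern `P`. -/
def IsPathOf (σ : Subst A V) (P : Finset (V × A)) (γ : List (V × A)) : Prop :=
  σ.IsPath γ ∧ ∀ c ∈ γ, c ∈ P

/-- A `C_σ`-loop of the pattern `P`. -/
def IsLoopOf (σ : Subst A V) (P : Finset (V × A)) (γ : List (V × A)) : Prop :=
  σ.IsPathOf P γ ∧ γ.head? = γ.getLast?

/-- `P` is `C_σ`-covered: any two of its cells are joined by a `C_σ`-path of `P`. -/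
def Covered (σ : Subst A V) (P : Finset (V × A)) : Prop :=
  ∀ c ∈ P, ∀ c' ∈ P,
    ∃ γ, σ.IsPathOf P γ ∧ γ.head? = some c ∧ γ.getLast? = some c'

/-- `σ` is consistent on `P`: any two `C_σ`-paths of `P` with the same first
and last cells have the same image vector. -/
def ConsistentOn (σ : Subst A V) (P : Finset (V × A)) : Prop :=
  ∀ γ γ' : List (V × A), σ.IsPathOf P γ → σ.IsPathOf P γ' →
    γ.head? = γ'.head? → γ.getLast? = γ'.getLast? → σ.omega γ = σ.omega γ'

/-- `σ` is consistent: it is consistent on every `C_σ`-covered pattern. -/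
def Consistent (σ : Subst A V) : Prop :=
  ∀ P : Finset (V × A), IsPattern P → σ.Covered P → σ.ConsistentOn P

/-- The support of the image of a letter. -/
noncomputable def supp (σ : Subst A V) (t : A) : Finset V :=
  (σ.base t).image Prod.fst

/-- `σ` is non-overlapping on `P`: the images of two distinct cells of `P`
joined by a `C_σ`-path of `P` have disjoint supports. -/
def NonOverlappingOn (σ : Subst A V) (P : Finset (V × A)) : Prop :=
  ∀ c ∈ P, ∀ c' ∈ P, c ≠ c' → ∀ γ, σ.IsPathOf P γ →
    γ.head? = some c → γ.getLast? = some c' →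
    ∀ b ∈ σ.supp c'.2, σ.omega γ + b ∉ σ.supp c.2

/-- `σ` is non-overlapping: it is non-overlapping on every `C_σ`-covered pattern. -/
def NonOverlapping (σ : Subst A V) : Prop :=
  ∀ P : Finset (V × A), IsPattern P → σ.Covered P → σ.NonOverlappingOn P

end Subst

/-- A Wang tile: a unit square with a color on each of its four edges. -/
structure WangTile (C : Type*) where
  north : C
  south : C
  east : C
  west : C

/-- The four arrow decorations. -/
inductive Dir : Type where
  | right : Dir
  | up : Dir
  | left : Dir
  | down : Dir
deriving DecidableEq

instance : Fintype Dir :=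
  ⟨{Dir.right, Dir.up, Dir.left, Dir.down}, fun x => by cases x <;> simp⟩

/-- The unit vector associated with a direction. -/
def dirVec : Dir → ℤ × ℤ
  | .right => (1, 0)
  | .up => (0, 1)
  | .left => (-1, 0)
  | .down => (0, -1)

/-- The colors of the Wang tiles `a` and `b` agree on the shared edge when
`b` is placed at position `u` relative to `a` (in particular `u` is a unit
vector). -/
def WangMatch {C : Type*} (a b : WangTile C) (u : ℤ × ℤ) : Prop :=
  (u = (1, 0) ∧ a.east = b.west) ∨ (u = (-1, 0) ∧ a.west = b.east) ∨
  (u = (0, 1) ∧ a.north = b.south) ∨ (u = (0, -1) ∧ a.south = b.north)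

/-- `T` admits a valid tiling of a cycle: a nontrivial cyclic sequence of
translates of tiles of `T` in which consecutive tiles are adjacent and match
in color. -/
def AdmitsCycle {C : Type*} (T : Finset (WangTile C)) : Prop :=
  ∃ (n : ℕ) (a : ℕ → WangTile C) (p : ℕ → ℤ × ℤ),
    5 ≤ n ∧ (∀ i < n, a i ∈ T) ∧
    (∀ i < n - 1, ∀ j < n - 1, p i = p j → i = j) ∧
    p (n - 1) = p 0 ∧ a (n - 1) = a 0 ∧
    ∀ i < n - 1, WangMatch (a i) (a (i + 1)) (p (i + 1) - p i)

/-- The substitution `σ_T` built from a Wang tile set `T`: letters are tiles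
of `T` decorated with an arrow, the base rule sends every letter to a single
cell at the origin, and the concatenation rules correspond exactly to the
matching dominoes of tiles of `T` in which exactly one arrow points at the
other cell, the image of the pointing cell being placed immediately to the
left of the image of the pointed cell. -/
noncomputable def sigmaT {C : Type*} (T : Finset (WangTile C)) :
    Subst (WangTile C × Dir) (ℤ × ℤ) where
  base t := {((0, 0), t)}
  basePat := by
    intro t c hc c' hc' _
    rw [Finset.mem_singleton] at hc hc'
    rw [hc, hc']
  rule t t' u :=
    if t.1 ∈ T ∧ t'.1 ∈ T ∧ WangMatch t.1 t'.1 u ∧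
        dirVec t.2 = u ∧ dirVec t'.2 ≠ -u
    then some (1, 0) else none
  finiteRules := by
    apply Set.Finite.subset (Set.finite_range dirVec)
    rintro u ⟨t, t', h⟩
    try simp only at h
    split_ifs at h with hc
    · exact ⟨t.2, hc.2.2.2.1⟩
    · exact absurd rfl h
  det := by
    intro t t' u h1 h2
    try simp only at h1 h2
    split_ifs at h1 with hA
    · split_ifs at h2 with hB
      · exact hA.2.2.2.1.symm.trans hB.2.2.2.1
      · simp at h2
    · simp at h1

/-!
Consecutive cells `c_i, c_{i+1}` of `γ` always carry a concatenation rule with image `(1, 0)`: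
the tiles match, the arrow of `c_i` points at `c_{i+1}`, and the arrow of `c_{i+1}` cannot point
back at `c_i` because a cycle of length at least four never returns to a position after two
steps. Hence `ω(γ) = (n - 1) • (1, 0)`. The cells of any `C_σ`-path form a `C_σ`-covered pattern,
and on the pattern of `γ` the loop `γ` and the trivial path `[c_1]` share their endpoints but
not their image vectors.
-/

theorem List.IsChain.exists_isChain_of_mem {α : Type*} {r : α → α → Prop}
    (hr : ∀ ⦃x y⦄, r x y → r y x) {l : List α} (hl : l.IsChain r) {a b : α}
    (ha : a ∈ l) (hb : b ∈ l) :
    ∃ m : List α, m.IsChain r ∧ (∀ x ∈ m, x ∈ l) ∧ m.head? = some a ∧ m.getLast? = some b := by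
  let S : α → α → Prop := fun x y => x ∈ l ∧ y ∈ l ∧ r x y
  have : Std.Symm S := ⟨fun _ _ ⟨hx, hy, h⟩ => ⟨hy, hx, hr h⟩⟩
  have hne : l ≠ [] := List.ne_nil_of_mem ha
  have reach : ∀ x ∈ l, Relation.ReflTransGen S (l.head hne) x :=
    (List.IsChain.iff_mem.mp hl).induction _ _ (fun _ _ hxy h => h.tail hxy) (fun _ => .refl)
  obtain ⟨m, hm, hmS, hhead, hlast⟩ := List.exists_isChain_ne_nil_of_relationReflTransGen
    ((Std.Symm.symm _ _ (reach a ha)).trans (reach b hb))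
  refine ⟨m, hmS.imp fun _ _ h => h.2.2, ?_, by rw [List.head?_eq_some_head hm, hhead],
    by rw [List.getLast?_eq_some_getLast hm, hlast]⟩
  exact hmS.induction _ _ (fun _ _ h _ => h.2.1) (fun _ => hhead ▸ ha)

namespace Subst

variable {A V : Type*} [AddCommGroup V] (σ : Subst A V)

theorem ruleVec_isSome_symm {c c' : V × A} (h : (σ.ruleVec c c').isSome) :
    (σ.ruleVec c' c).isSome := by
  unfold ruleVec at *
  cases h' : σ.rule c'.2 c.2 (c.1 - c'.1) <;> cases h'' : σ.rule c.2 c'.2 (c'.1 - c.1) <;>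
    simp_all

theorem omega_singleton (c : V × A) : σ.omega [c] = 0 := rfl

theorem omega_cons_cons (c c' : V × A) (l : List (V × A)) :
    σ.omega (c :: c' :: l) = (σ.ruleVec c c').getD 0 + σ.omega (c' :: l) := by
  simp [omega]

theorem omega_eq_nsmul_of_isChain {v : V} :
    ∀ {γ : List (V × A)}, γ.IsChain (fun c c' => σ.ruleVec c c' = some v) →
      σ.omega γ = (γ.length - 1) • v
  | [], _ => by simp [omega]
  | [_], _ => by simp [omega_singleton]
  | c :: c' :: l, h => by
    rw [List.isChain_cons_cons] at h
    rw [omega_cons_cons, omega_eq_nsmul_of_isChain h.2, h.1]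
    simp [succ_nsmul']

theorem isPath_singleton (c : V × A) : σ.IsPath [c] :=
  ⟨List.cons_ne_nil _ _, .singleton _, by simp⟩

variable {σ} {γ : List (V × A)}

theorem IsPath.isPattern_toFinset (hγ : σ.IsPath γ) : IsPattern γ.toFinset := by
  simpa only [IsPattern, List.mem_toFinset] using hγ.2.2

theorem IsPath.covered_toFinset (hγ : σ.IsPath γ) : σ.Covered γ.toFinset := by
  intro c hc c' hc'
  obtain ⟨δ, hδ, hδγ, hhead, hlast⟩ := hγ.2.1.exists_isChain_of_mem
    (fun _ _ => σ.ruleVec_isSome_symm) (List.mem_toFinset.mp hc) (List.mem_toFinset.mp hc')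
  refine ⟨δ, ⟨⟨?_, hδ, fun x hx y hy => hγ.2.2 x (hδγ x hx) y (hδγ y hy)⟩,
    fun x hx => List.mem_toFinset.mpr (hδγ x hx)⟩, hhead, hlast⟩
  rintro rfl
  simp at hhead

theorem IsPath.not_consistent_of_omega_ne_zero (hγ : σ.IsPath γ) (hloop : γ.head? = γ.getLast?)
    (hω : σ.omega γ ≠ 0) : ¬ σ.Consistent := by
  intro hcons
  obtain ⟨c, hc⟩ := Option.isSome_iff_exists.mp (List.isSome_head?.mpr hγ.1)
  have hcγ : c ∈ γ := List.mem_of_mem_head? hc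
  refine hω (hcons _ hγ.isPattern_toFinset hγ.covered_toFinset γ [c]
    ⟨hγ, fun _ => List.mem_toFinset.mpr⟩ ⟨σ.isPath_singleton c, ?_⟩ hc ?_)
  · simpa using hcγ
  · simp [← hloop, hc]

end Subst

theorem sigmaT_ruleVec_eq {C : Type*} {T : Finset (WangTile C)} {u u' : ℤ × ℤ}
    {t t' : WangTile C × Dir} (ht : t.1 ∈ T) (ht' : t'.1 ∈ T) (hm : WangMatch t.1 t'.1 (u' - u))
    (hpoint : dirVec t.2 = u' - u) (hback : dirVec t'.2 ≠ u - u') :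
    (sigmaT T).ruleVec (u, t) (u', t') = some (1, 0) := by
  have hrule : (sigmaT T).rule t t' (u' - u) = some (1, 0) :=
    if_pos ⟨ht, ht', hm, hpoint, by rwa [neg_sub]⟩
  simp only [Subst.ruleVec, hrule]

theorem eq_of_fst_eq_of_cycle {α β : Type*} (f : ℕ → α × β) {n : ℕ}
    (hinj : ∀ i < n - 1, ∀ j < n - 1, (f i).1 = (f j).1 → i = j) (hcyc : f (n - 1) = f 0)
    {i j : ℕ} (hi : i < n) (hj : j < n) (h : (f i).1 = (f j).1) : f i = f j := by
  rcases Nat.lt_or_ge n 2 with hn | hn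
  · obtain rfl : i = j := by omega
    rfl
  have reduce : ∀ k < n, ∃ k' < n - 1, f k = f k' := fun k hk =>
    if hk' : k = n - 1 then ⟨0, by omega, hk' ▸ hcyc⟩ else ⟨k, by omega, rfl⟩
  obtain ⟨i', hi', hfi⟩ := reduce i hi
  obtain ⟨j', hj', hfj⟩ := reduce j hj
  rw [hfi, hfj, hinj i' hi' j' hj' (by rw [← hfi, ← hfj, h])]

theorem dirVec_succ_ne_of_cycle {n : ℕ} {p : ℕ → ℤ × ℤ} {dir : ℕ → Dir} (hn : 4 ≤ n)
    (hinj : ∀ i < n - 1, ∀ j < n - 1, p i = p j → i = j) (hpcyc : p (n - 1) = p 0)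
    (hdir : ∀ i < n - 1, dirVec (dir i) = p (i + 1) - p i) (hdircyc : dir (n - 1) = dir 0)
    {i : ℕ} (hi : i < n - 1) : dirVec (dir (i + 1)) ≠ p i - p (i + 1) := by
  rcases Nat.lt_or_ge (i + 1) (n - 1) with hi' | hi'
  · rw [hdir (i + 1) hi', Ne, sub_left_inj]
    intro hback
    rcases Nat.lt_or_ge (i + 2) (n - 1) with hi'' | hi''
    · exact absurd (hinj _ hi'' _ (by omega) hback) (by omega)
    · rw [show i + 1 + 1 = n - 1 by omega, hpcyc] at hback
      exact absurd (hinj _ (by omega) _ (by omega) hback.symm) (by omega)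
  · rw [show i + 1 = n - 1 by omega, hdircyc, hdir 0 (by omega), ← hpcyc, Ne, sub_left_inj]
    exact fun h => absurd (hinj _ (by omega) _ (by omega) h) (by omega)

/-- Given a valid tiling of a cycle `(a_1, …, a_n)` of a
Wang tile set `T`, placed at positions `p_1, …, p_n`, decorate each tile
`a_i` with the arrow `dir i` pointing from `p_i` to `p_{i+1}`.  The resulting
sequence of cells `γ` is a `C_{σ_T}`-loop whose image vector is
`(n - 1, 0) ≠ (0,0)`; in particular `σ_T` is not consistent. -/
theorem cycle_gives_nonzero_loop {C : Type*} (T : Finset (WangTile C))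
    (n : ℕ) (a : ℕ → WangTile C) (p : ℕ → ℤ × ℤ)
    (hn : 5 ≤ n) (hT : ∀ i < n, a i ∈ T)
    (hinj : ∀ i < n - 1, ∀ j < n - 1, p i = p j → i = j)
    (hpcyc : p (n - 1) = p 0) (hacyc : a (n - 1) = a 0)
    (hmatch : ∀ i < n - 1, WangMatch (a i) (a (i + 1)) (p (i + 1) - p i))
    (dir : ℕ → Dir)
    (hdir : ∀ i < n - 1, dirVec (dir i) = p (i + 1) - p i)
    (hdircyc : dir (n - 1) = dir 0)
    (γ : List ((ℤ × ℤ) × (WangTile C × Dir)))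
    (hγ : γ = (List.range n).map fun i => (p i, (a i, dir i))) :
    (sigmaT T).IsPath γ ∧ γ.head? = γ.getLast? ∧
      (sigmaT T).omega γ = ((n : ℤ) - 1, 0) ∧
      ((((n : ℤ) - 1, (0 : ℤ)) : ℤ × ℤ) ≠ (0, 0)) ∧
      ¬ (sigmaT T).Consistent := by
  let cell : ℕ → (ℤ × ℤ) × (WangTile C × Dir) := fun i => (p i, (a i, dir i))
  have hcyc : cell (n - 1) = cell 0 := by simp only [cell, hpcyc, hacyc, hdircyc]
  have hchain : γ.IsChain fun c c' => (sigmaT T).ruleVec c c' = some (1, 0) := by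
    rw [hγ, List.isChain_map, List.isChain_range]
    exact fun i hi => sigmaT_ruleVec_eq (hT i (by omega)) (hT (i + 1) (by omega))
      (hmatch i hi) (hdir i hi) (dirVec_succ_ne_of_cycle (by omega) hinj hpcyc hdir hdircyc hi)
  have hpath : (sigmaT T).IsPath γ := by
    refine ⟨by simp [hγ]; omega, hchain.imp fun _ _ h => by simp [h], ?_⟩
    simp only [hγ, List.mem_map, List.mem_range]
    rintro _ ⟨i, hi, rfl⟩ _ ⟨j, hj, rfl⟩
    exact eq_of_fst_eq_of_cycle cell hinj hcyc hi hj
  have hloop : γ.head? = γ.getLast? := by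
    simp [hγ, List.head?_range, List.getLast?_range, show n ≠ 0 by omega, hpcyc, hacyc, hdircyc]
  have homega : (sigmaT T).omega γ = ((n : ℤ) - 1, 0) := by
    rw [Subst.omega_eq_nsmul_of_isChain _ hchain, hγ, List.length_map, List.length_range]
    ext <;> simp
    omega
  have hne : ((n : ℤ) - 1, (0 : ℤ)) ≠ (0, 0) := by simp; omega
  exact ⟨hpath, hloop, homega, hne, hpath.not_consistent_of_omega_ne_zero hloop (by rwa [homega])⟩
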